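/- Let b(x) = (1 - 2ⁿ)·χ_{|x|≤1}(x) + χ_{1<|x|≤2}(x) on ℝⁿ. Then ∫_{ℝⁿ} ℋ(b)(x) dx = -n·2ⁿ·log 2 · v_n ≠ 0; in particular ℋ(b) does not have vanishing integral, so ℋ(b) ∉ H¹(ℝⁿ) even though b is (a multiple of) an H¹ atom. -/

import Mathlib

open MeasureTheory Metric

/-- Volume of the ball of radius `r` in `ℝⁿ`. -/
noncomputable def ballVol (n : ℕ) (r : ℝ) : ℝ :=
  (volume (ball (0 : EuclideanSpace ℝ (Fin n)) r)).toReal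

/-- The `n`-dimensional Hardy operator
`ℋf(x) = (1/(vₙ |x|ⁿ)) ∫_{|y| < |x|} f(y) dy`. -/
noncomputable def hardyOp (n : ℕ) (f : EuclideanSpace ℝ (Fin n) → ℝ)
    (x : EuclideanSpace ℝ (Fin n)) : ℝ :=
  (ballVol n 1 * ‖x‖ ^ n)⁻¹ * ∫ y in ball (0 : EuclideanSpace ℝ (Fin n)) ‖x‖, f y

/-- `b(x) = (1 - 2ⁿ)·χ_{|x|≤1}(x) + χ_{1<|x|≤2}(x)`. -/
noncomputable def bFun (n : ℕ) (x : EuclideanSpace ℝ (Fin n)) : ℝ :=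
  if ‖x‖ ≤ 1 then 1 - 2 ^ n else if ‖x‖ ≤ 2 then 1 else 0

/-!
`ℋb` is radial: `∫_{|y|<r} b = vₙ (min(r,2)ⁿ - 2ⁿ min(r,1)ⁿ)`, so `ℋb(x) = g(|x|)` with
`g(r) = r⁻ⁿ (min(r,2)ⁿ - 2ⁿ min(r,1)ⁿ)`. In polar coordinates `∫ ℋb = n vₙ ∫₀^∞ rⁿ⁻¹ g(r) dr`,
and `rⁿ⁻¹ g(r)` is `(1 - 2ⁿ) rⁿ⁻¹` on `(0,1]`, `rⁿ⁻¹ - 2ⁿ/r` on `[1,2]` and `0` beyond `2`.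
The polynomial parts cancel, leaving `-2ⁿ ∫₁² dr/r = -2ⁿ log 2`. The dilation invariance of
`ℋ` would formally give `∫ ℋb = 0`; it fails because `ℋχ_{B(0,1)}(x) = |x|⁻ⁿ` for `|x| ≥ 1` is
not integrable.
-/

open Set Module Real

section AddHaar

variable {E : Type*} [NormedAddCommGroup E] [NormedSpace ℝ E] [FiniteDimensional ℝ E]
  [MeasurableSpace E] [BorelSpace E] [Nontrivial E] (μ : Measure E) [μ.IsAddHaarMeasure]

theorem measureReal_ball_inter_closedBall {r R : ℝ} (hr : 0 ≤ r) (hR : 0 ≤ R) :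
    μ.real (ball (0 : E) r ∩ closedBall 0 R) = min r R ^ finrank ℝ E * μ.real (ball 0 1) := by
  rcases le_or_gt r R with h | h
  · rw [inter_eq_left.2 (ball_subset_closedBall.trans (closedBall_subset_closedBall h)),
      min_eq_left h, measureReal_def, Measure.addHaar_ball μ _ hr, ENNReal.toReal_mul,
      ENNReal.toReal_ofReal (by positivity), measureReal_def]
  · rw [inter_eq_right.2 (closedBall_subset_ball h), min_eq_right h.le, measureReal_def,
      Measure.addHaar_closedBall μ _ hR, ENNReal.toReal_mul,
      ENNReal.toReal_ofReal (by positivity), measureReal_def]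

theorem setIntegral_ball_indicator_closedBall {r R : ℝ} (hr : 0 ≤ r) (hR : 0 ≤ R) :
    ∫ y in ball (0 : E) r, (closedBall 0 R).indicator 1 y ∂μ
      = min r R ^ finrank ℝ E * μ.real (ball 0 1) := by
  rw [integral_indicator_one measurableSet_closedBall, measureReal_restrict_apply
    measurableSet_closedBall, inter_comm, measureReal_ball_inter_closedBall μ hr hR]

end AddHaar

noncomputable def hardyProfile (n : ℕ) (r : ℝ) : ℝ :=
  (r ^ n)⁻¹ * (min r 2 ^ n - 2 ^ n * min r 1 ^ n)

section Profile

variable {n : ℕ} {r : ℝ}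

theorem pow_mul_hardyProfile_of_le_one (hr : 0 < r) (h1 : r ≤ 1) :
    r ^ (n - 1) * hardyProfile n r = (1 - 2 ^ n) * r ^ (n - 1) := by
  rw [hardyProfile, min_eq_left h1, min_eq_left (h1.trans one_le_two)]
  field_simp

theorem pow_mul_hardyProfile_of_one_le_of_le_two (hn : 0 < n) (h1 : 1 ≤ r) (h2 : r ≤ 2) :
    r ^ (n - 1) * hardyProfile n r = r ^ (n - 1) - 2 ^ n * r⁻¹ := by
  have hr : r ≠ 0 := (one_pos.trans_le h1).ne'
  have hpow : r ^ n = r ^ (n - 1) * r := by rw [← pow_succ, Nat.sub_add_cancel hn]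
  rw [hardyProfile, min_eq_left h2, min_eq_right h1, hpow]
  field_simp
  ring

theorem hardyProfile_of_two_le (h2 : 2 ≤ r) : hardyProfile n r = 0 := by
  simp [hardyProfile, min_eq_right h2, min_eq_right (one_le_two.trans h2)]

theorem integral_pow_mul_hardyProfile_zero_one (hn : 0 < n) :
    ∫ r in (0 : ℝ)..1, r ^ (n - 1) * hardyProfile n r = (1 - 2 ^ n) / n := by
  rw [intervalIntegral.integral_congr_Ioo_of_le zero_le_one
    fun r hr => pow_mul_hardyProfile_of_le_one hr.1 hr.2.le, intervalIntegral.integral_const_mul,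
    integral_pow, Nat.cast_sub hn]
  simp [div_eq_mul_inv]

theorem integral_pow_mul_hardyProfile_one_two (hn : 0 < n) :
    ∫ r in (1 : ℝ)..2, r ^ (n - 1) * hardyProfile n r = (2 ^ n - 1) / n - 2 ^ n * log 2 := by
  have hinv : IntervalIntegrable (fun r : ℝ => r⁻¹) volume 1 2 := by
    simp [intervalIntegrable_inv_iff]
  rw [intervalIntegral.integral_congr_Ioo_of_le one_le_two
    fun r hr => pow_mul_hardyProfile_of_one_le_of_le_two hn hr.1.le hr.2.le,
    intervalIntegral.integral_sub (intervalIntegral.intervalIntegrable_pow _) (hinv.const_mul _),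
    intervalIntegral.integral_const_mul, integral_pow, integral_inv_of_pos one_pos two_pos,
    Nat.cast_sub hn, Nat.sub_add_cancel hn]
  simp

theorem integral_Ioi_pow_mul_hardyProfile (hn : 0 < n) :
    ∫ r in Ioi 0, r ^ (n - 1) * hardyProfile n r = -(2 ^ n * log 2) := by
  have h01 : IntervalIntegrable (fun r => r ^ (n - 1) * hardyProfile n r) volume 0 1 := by
    refine ((intervalIntegral.intervalIntegrable_pow (n - 1)).const_mul (1 - 2 ^ n)).congr_uIoo ?_
    rw [uIoo_of_le zero_le_one]
    exact fun r hr => (pow_mul_hardyProfile_of_le_one hr.1 hr.2.le).symm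
  have h12 : IntervalIntegrable (fun r => r ^ (n - 1) * hardyProfile n r) volume 1 2 := by
    have hinv : IntervalIntegrable (fun r : ℝ => r⁻¹) volume 1 2 := by
      simp [intervalIntegrable_inv_iff]
    refine ((intervalIntegral.intervalIntegrable_pow (n - 1)).sub
      (hinv.const_mul (2 ^ n))).congr_uIoo ?_
    rw [uIoo_of_le one_le_two]
    exact fun r hr => (pow_mul_hardyProfile_of_one_le_of_le_two hn hr.1.le hr.2.le).symm
  rw [setIntegral_eq_of_subset_of_forall_sdiff_eq_zero measurableSet_Ioi Ioc_subset_Ioi_self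
      fun r hr => by simp [hardyProfile_of_two_le (not_le.1 fun h => hr.2 ⟨hr.1, h⟩).le],
    ← intervalIntegral.integral_of_le zero_le_two,
    ← intervalIntegral.integral_add_adjacent_intervals h01 h12,
    integral_pow_mul_hardyProfile_zero_one hn, integral_pow_mul_hardyProfile_one_two hn]
  ring

end Profile

theorem bFun_eq_indicator (n : ℕ) :
    bFun n = (closedBall 0 2).indicator 1 - (2 : ℝ) ^ n • (closedBall 0 1).indicator 1 := by
  ext x
  by_cases h1 : ‖x‖ ≤ 1
  · simp [bFun, indicator, h1, h1.trans one_le_two]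
  · by_cases h2 : ‖x‖ ≤ 2 <;> simp [bFun, indicator, h1, h2]

theorem ballVol_one_pos (n : ℕ) : 0 < ballVol n 1 :=
  ENNReal.toReal_pos (measure_ball_pos volume _ one_pos).ne' measure_ball_lt_top.ne

section Euclidean

variable {n : ℕ}

theorem setIntegral_ball_bFun (hn : 0 < n) {r : ℝ} (hr : 0 ≤ r) :
    ∫ y in ball (0 : EuclideanSpace ℝ (Fin n)) r, bFun n y
      = ballVol n 1 * (min r 2 ^ n - 2 ^ n * min r 1 ^ n) := by
  have : NeZero n := ⟨hn.ne'⟩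
  have hint (R : ℝ) : IntegrableOn ((closedBall (0 : EuclideanSpace ℝ (Fin n)) R).indicator 1)
      (ball 0 r) := (integrableOn_const (C := (1 : ℝ))).indicator measurableSet_closedBall
  simp only [bFun_eq_indicator, Pi.sub_apply, Pi.smul_apply, smul_eq_mul]
  rw [integral_sub (hint 2) ((hint 1).const_mul _), integral_const_mul,
    setIntegral_ball_indicator_closedBall _ hr zero_le_two,
    setIntegral_ball_indicator_closedBall _ hr zero_le_one, finrank_euclideanSpace_fin,
    ballVol, ← measureReal_def]
  ring

theorem hardyOp_bFun (hn : 0 < n) (x : EuclideanSpace ℝ (Fin n)) :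
    hardyOp n (bFun n) x = hardyProfile n ‖x‖ := by
  have := (ballVol_one_pos n).ne'
  rw [hardyOp, setIntegral_ball_bFun hn (norm_nonneg x), hardyProfile]
  field_simp

end Euclidean

/-- `∫_{ℝⁿ} ℋ(b) = -n·2ⁿ·log 2·vₙ ≠ 0`: `ℋ(b)` does not have vanishing integral
(so `ℋ(b) ∉ H¹(ℝⁿ)`), even though `b` is (a multiple of) an `H¹` atom. -/
theorem integral_hardy_bFun_ne_zero (n : ℕ) (hn : 0 < n) :
    (∫ x, hardyOp n (bFun n) x) = -(n : ℝ) * 2 ^ n * Real.log 2 * ballVol n 1 ∧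
    (∫ x, hardyOp n (bFun n) x) ≠ 0 := by
  have : NeZero n := ⟨hn.ne'⟩
  have hint : ∫ x, hardyOp n (bFun n) x = -(n : ℝ) * 2 ^ n * Real.log 2 * ballVol n 1 := by
    simp_rw [hardyOp_bFun hn, integral_fun_norm_addHaar volume (hardyProfile n),
      finrank_euclideanSpace_fin, smul_eq_mul, integral_Ioi_pow_mul_hardyProfile hn, nsmul_eq_mul,
      ballVol, measureReal_def]
    ring
  refine ⟨hint, hint ▸ ?_⟩
  have := ballVol_one_pos n
  have := Real.log_pos one_lt_two
  have : (0 : ℝ) < n := Nat.cast_pos.2 hn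
  simp only [neg_mul, neg_ne_zero]
  positivity
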